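/- arXiv:0803.1909 — 2 statements merged into one kernel-verified Lean document; each statement's English description precedes it below -/
import Mathlib

section
/- Let Σ be a p×p symmetric matrix whose entries satisfy max_j Σ_{i : |i-j| > k} |σ_{ij}| ≤ C k^{-α} for all k > 0. Then the k-banded matrix B_k(Σ), obtained by setting to zero all entries with |i-j| > k, satisfies ‖B_k(Σ) - Σ‖ ≤ C k^{-α} in the l²-operator norm. -/
/-!
The entries of `B_k(Σ) - Σ` are `-σᵢⱼ` for `|i - j| > k` and `0` otherwise, so its absolute
column sums are exactly the tail sums of the hypothesis, and by symmetry so are its absolute row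
sums. The Schur test bounds the spectral norm by the geometric mean of the largest absolute row
and column sums, which gives `C k^(-α)`.
-/

noncomputable def specNorm {p : ℕ} (M : Matrix (Fin p) (Fin p) ℝ) : ℝ :=
  ‖Matrix.toEuclideanCLM (𝕜 := ℝ) M‖

/-- The banding operator `B_k`. -/
def band {p : ℕ} (k : ℕ) (M : Matrix (Fin p) (Fin p) ℝ) : Matrix (Fin p) (Fin p) ℝ :=
  Matrix.of fun i j => if |(i : ℤ) - (j : ℤ)| ≤ (k : ℤ) then M i j else 0

open Matrix Finset

namespace Matrix

variable {𝕜 n : Type*} [RCLike 𝕜] [Fintype n]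

theorem norm_sq_mulVec_le_of_sum_norm_le (M : Matrix n n 𝕜) {r c : ℝ} (hr : 0 ≤ r)
    (hrow : ∀ i, ∑ j, ‖M i j‖ ≤ r) (hcol : ∀ j, ∑ i, ‖M i j‖ ≤ c) (x : n → 𝕜) :
    ∑ i, ‖(M *ᵥ x) i‖ ^ 2 ≤ r * c * ∑ j, ‖x j‖ ^ 2 := by
  have hcs : ∀ i, ‖(M *ᵥ x) i‖ ^ 2 ≤ r * ∑ j, ‖M i j‖ * ‖x j‖ ^ 2 := fun i => by
    calc ‖(M *ᵥ x) i‖ ^ 2 ≤ (∑ j, ‖M i j‖ * ‖x j‖) ^ 2 := by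
          gcongr
          simpa only [mulVec, dotProduct, norm_mul] using norm_sum_le univ fun j => M i j * x j
      _ ≤ (∑ j, ‖M i j‖) * ∑ j, ‖M i j‖ * ‖x j‖ ^ 2 :=
          sum_sq_le_sum_mul_sum_of_sq_le_mul _ (fun _ _ => norm_nonneg _)
            (fun _ _ => by positivity) fun _ _ => le_of_eq (by ring)
      _ ≤ r * ∑ j, ‖M i j‖ * ‖x j‖ ^ 2 := by gcongr; exact hrow i
  calc ∑ i, ‖(M *ᵥ x) i‖ ^ 2 ≤ ∑ i, r * ∑ j, ‖M i j‖ * ‖x j‖ ^ 2 := sum_le_sum fun i _ => hcs i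
    _ = r * ∑ j, (∑ i, ‖M i j‖) * ‖x j‖ ^ 2 := by
        rw [← mul_sum, sum_comm]; simp only [sum_mul]
    _ ≤ r * ∑ j, c * ‖x j‖ ^ 2 := by gcongr with j; exact hcol j
    _ = r * c * ∑ j, ‖x j‖ ^ 2 := by rw [← mul_sum, mul_assoc]

/-- The Schur test. -/
theorem norm_toEuclideanCLM_le_of_sum_norm_le [DecidableEq n] (M : Matrix n n 𝕜) {r c : ℝ}
    (hr : 0 ≤ r)
    (hrow : ∀ i, ∑ j, ‖M i j‖ ≤ r) (hcol : ∀ j, ∑ i, ‖M i j‖ ≤ c) :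
    ‖toEuclideanCLM (𝕜 := 𝕜) M‖ ≤ √(r * c) := by
  refine ContinuousLinearMap.opNorm_le_bound _ (Real.sqrt_nonneg _) fun x => ?_
  rw [← Real.sqrt_sq (norm_nonneg _), ← Real.sqrt_sq (norm_nonneg x),
    ← Real.sqrt_mul' _ (by positivity)]
  gcongr
  rw [EuclideanSpace.norm_sq_eq, EuclideanSpace.norm_sq_eq]
  exact M.norm_sq_mulVec_le_of_sum_norm_le hr hrow hcol x

end Matrix

section Band

variable {p : ℕ} (k : ℕ)

theorem band_transpose (M : Matrix (Fin p) (Fin p) ℝ) : band k Mᵀ = (band k M)ᵀ := by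
  ext i j
  simp only [band, of_apply, transpose_apply, abs_sub_comm (j : ℤ)]

theorem band_sub_self_apply (M : Matrix (Fin p) (Fin p) ℝ) (i j : Fin p) :
    (band k M - M) i j = if (k : ℤ) < |(i : ℤ) - (j : ℤ)| then -M i j else 0 := by
  simp only [band, Matrix.sub_apply, of_apply, ← not_le]
  split_ifs <;> simp

theorem sum_abs_band_sub_self_apply (M : Matrix (Fin p) (Fin p) ℝ) (j : Fin p) :
    ∑ i, |(band k M - M) i j| =
      ∑ i ∈ univ.filter (fun i : Fin p => (k : ℤ) < |(i : ℤ) - (j : ℤ)|), |M i j| := by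
  rw [sum_filter]
  refine sum_congr rfl fun i _ => ?_
  rw [band_sub_self_apply]
  split_ifs <;> simp

end Band

theorem stmt4_general {p : ℕ} (S : Matrix (Fin p) (Fin p) ℝ) (hS : S.transpose = S)
    (C α : ℝ) (hC : 0 < C)
    (hdecay : ∀ k : ℕ, 0 < k → ∀ j : Fin p,
      (∑ i ∈ Finset.univ.filter (fun i : Fin p => (k : ℤ) < |(i : ℤ) - (j : ℤ)|), |S i j|)
        ≤ C * (k : ℝ) ^ (-α)) :
    ∀ k : ℕ, 0 < k → specNorm (band k S - S) ≤ C * (k : ℝ) ^ (-α) := by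
  intro k hk
  set R := C * (k : ℝ) ^ (-α)
  have hcol : ∀ j, ∑ i, ‖(band k S - S) i j‖ ≤ R := fun j => by
    simpa only [Real.norm_eq_abs, sum_abs_band_sub_self_apply] using hdecay k hk j
  have hrow : ∀ i, ∑ j, ‖(band k S - S) i j‖ ≤ R := fun i => by
    have hsymm : (band k S - S)ᵀ = band k S - S := by
      rw [transpose_sub, ← band_transpose, hS]
    rw [← hsymm]
    exact hcol i
  have hR : 0 ≤ R := by positivity
  calc specNorm (band k S - S) ≤ √(R * R) :=
        (band k S - S).norm_toEuclideanCLM_le_of_sum_norm_le hR hrow hcol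
    _ = R := Real.sqrt_mul_self hR

theorem stmt4 {p : ℕ} (S : Matrix (Fin p) (Fin p) ℝ) (hS : S.transpose = S)
    (C α : ℝ) (hC : 0 < C) (hα : 0 < α)
    (hdecay : ∀ k : ℕ, 0 < k → ∀ j : Fin p,
      (∑ i ∈ Finset.univ.filter (fun i : Fin p => (k : ℤ) < |(i : ℤ) - (j : ℤ)|), |S i j|)
        ≤ C * (k : ℝ) ^ (-α)) :
    ∀ k : ℕ, 0 < k → specNorm (band k S - S) ≤ C * (k : ℝ) ^ (-α) :=
  stmt4_general S hS C α hC hdecay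
end

section
/- Let K be a p×p positive semidefinite matrix with diagonal entries K_{ii} ≤ C i^{-m} for all i, where m > 2. Then for every j ≥ k, Σ_{i : |i-j| > k} |K_{ij}| ≤ C (m/2 - 1)^{-1} k^{-m/2 + 1}. -/
open Finset Real

/-!
Cauchy–Schwarz for the positive semidefinite form `K` gives
`|K i j| ≤ C ((i + 1) (j + 1)) ^ (-s)` with `s = m / 2`. Put `x = j + 1` and group the indices
`i + 1 = x ± d` lying at distance `d > k` from `x`: the two terms of such a pair add up to at most
`d ^ (-s)`, so the whole sum is bounded by
`∑_{d > k} d ^ (-s) ≤ ∫_k^∞ t ^ (-s) dt = k ^ (1 - s) / (s - 1)`.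
-/

theorem Matrix.PosSemidef.sq_apply_le_apply_mul_apply {n : Type*} [Fintype n]
    {K : Matrix n n ℝ} (hK : K.PosSemidef) (i j : n) : K i j ^ 2 ≤ K i i * K j j := by
  classical
  have h := LinearMap.BilinForm.apply_mul_apply_le_of_forall_zero_le (Matrix.toLinearMap₂' ℝ K)
    (fun x => by simpa [Matrix.toLinearMap₂'_apply'] using hK.dotProduct_mulVec_nonneg x)
    (Pi.single i 1) (Pi.single j 1)
  simp only [Matrix.toLinearMap₂'_apply', Matrix.mulVec_single_one, single_one_dotProduct,
    Matrix.col_apply] at h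
  have hji : K j i = K i j := by simpa using hK.isHermitian.apply i j
  rwa [hji, ← sq] at h

theorem Matrix.PosSemidef.abs_apply_le_of_diag_le_sq {n : Type*} [Fintype n]
    {K : Matrix n n ℝ} (hK : K.PosSemidef) {a : n → ℝ} (ha0 : ∀ i, 0 ≤ a i)
    (ha : ∀ i, K i i ≤ a i ^ 2) (i j : n) : |K i j| ≤ a i * a j := by
  refine abs_le_of_sq_le_sq ?_ (mul_nonneg (ha0 i) (ha0 j))
  calc K i j ^ 2 ≤ K i i * K j j := hK.sq_apply_le_apply_mul_apply i j
    _ ≤ a i ^ 2 * a j ^ 2 := mul_le_mul (ha i) (ha j) hK.diag_nonneg (sq_nonneg _)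
    _ = (a i * a j) ^ 2 := by ring

theorem rpow_neg_le_mul_div {s d u : ℝ} (hs : 1 ≤ s) (hd : 0 < d) (hdu : d ≤ u) :
    u ^ (-s) ≤ d ^ (-s) * (d / u) := by
  have hu : 0 < u := hd.trans_le hdu
  calc u ^ (-s) = d ^ (-s) * (d / u) ^ s := by
        rw [div_rpow hd.le hu.le, rpow_neg hd.le, rpow_neg hu.le]
        field_simp
    _ ≤ d ^ (-s) * (d / u) := by
        gcongr
        exact rpow_le_self_of_le_one (by positivity) ((div_le_one hu).2 hdu) hs

theorem rpow_neg_add_rpow_neg_le {s d x : ℝ} (hs : 1 ≤ s) (hd : 0 < d) (hdx : d + 1 ≤ x) :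
    ((x + d) * x) ^ (-s) + ((x - d) * x) ^ (-s) ≤ d ^ (-s) := by
  have hx : 1 ≤ x := by linarith
  have h₁ : d ≤ (x + d) * x := by nlinarith
  have h₂ : d ≤ (x - d) * x := by nlinarith
  -- the left side equals `2 d / (x (x² - d²))`, and `x² - d² ≥ 2 d + 1` as `x - d ≥ 1`
  have hsum : d / ((x + d) * x) + d / ((x - d) * x) ≤ 1 := by
    have : 2 * d ≤ (x + d) * (x - d) := by nlinarith
    rw [div_add_div _ _ (by positivity) (by nlinarith), div_le_one (by nlinarith)]
    nlinarith [mul_le_mul_of_nonneg_left this (sq_nonneg x)]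
  calc _ ≤ d ^ (-s) * (d / ((x + d) * x)) + d ^ (-s) * (d / ((x - d) * x)) :=
        add_le_add (rpow_neg_le_mul_div hs hd h₁) (rpow_neg_le_mul_div hs hd h₂)
    _ ≤ d ^ (-s) := by
        rw [← mul_add]
        exact mul_le_of_le_one_right (by positivity) hsum

theorem natCast_rpow_neg_add_ite_le {s : ℝ} (hs : 1 ≤ s) {d : ℕ} (hd : 0 < d) (j : ℕ) :
    ((((j + d : ℕ) : ℝ) + 1) * ((j : ℝ) + 1)) ^ (-s) +
      (if d ≤ j then ((((j - d : ℕ) : ℝ) + 1) * ((j : ℝ) + 1)) ^ (-s) else 0) ≤ (d : ℝ) ^ (-s) := by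
  have hd0 : (0 : ℝ) < d := by exact_mod_cast hd
  split_ifs with hdj
  · have := rpow_neg_add_rpow_neg_le hs hd0 (x := j + 1) (by exact_mod_cast Nat.succ_le_succ hdj)
    push_cast [Nat.cast_sub hdj]
    convert this using 4 <;> ring
  · rw [add_zero]
    exact rpow_le_rpow_of_nonpos hd0 (by push_cast; nlinarith) (by linarith)

theorem sum_Ioc_natCast_rpow_neg_le {s : ℝ} (hs : 1 < s) {k : ℕ} (hk : 0 < k) (M : ℕ) :
    ∑ d ∈ Ioc k M, (d : ℝ) ^ (-s) ≤ (s - 1)⁻¹ * (k : ℝ) ^ (1 - s) := by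
  have hk' : (0 : ℝ) < k := by exact_mod_cast hk
  have hanti : AntitoneOn (fun t : ℝ => t ^ (-s)) (Set.Icc (k : ℝ) M) :=
    (antitoneOn_rpow_Ioi_of_exponent_nonpos (by linarith)).mono fun t ht => hk'.trans_le ht.1
  calc ∑ d ∈ Ioc k M, (d : ℝ) ^ (-s) = ∑ n ∈ Ico k M, ((n + 1 : ℕ) : ℝ) ^ (-s) := by
        rw [← Ico_add_one_add_one_eq_Ioc, ← sum_Ico_add']
    _ ≤ ∫ t in Set.Ioi (k : ℝ), t ^ (-s) :=
        hanti.sum_Ico_le_integral (integrableOn_Ioi_rpow_of_lt (by linarith) hk')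
          fun t ht => rpow_nonneg (hk'.trans ht).le _
    _ = (s - 1)⁻¹ * (k : ℝ) ^ (1 - s) := by
        rw [integral_Ioi_rpow_of_lt (by linarith) hk', neg_add_eq_sub, ← neg_sub s 1, div_neg,
          neg_div, neg_neg, div_eq_inv_mul]

theorem sum_rpow_neg_mul_le_of_lt_dist {s : ℝ} (hs : 1 < s) {k : ℕ} (hk : 0 < k) (P j : ℕ) :
    ∑ i ∈ (range P).filter (fun i : ℕ => (k : ℤ) < |(i : ℤ) - j|),
        (((i : ℝ) + 1) * ((j : ℝ) + 1)) ^ (-s) ≤ (s - 1)⁻¹ * (k : ℝ) ^ (1 - s) := by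
  set f : ℕ → ℝ := fun i => (((i : ℝ) + 1) * ((j : ℝ) + 1)) ^ (-s)
  set S := (range P).filter (fun i : ℕ => (k : ℤ) < |(i : ℤ) - j|)
  have hf : ∀ i, 0 ≤ f i := fun i => by positivity
  have hright : S.filter (j < ·) ⊆ (Ioc k P).image (j + ·) := by
    intro i hi
    simp only [S, mem_filter, mem_range] at hi
    simp only [mem_image, mem_Ioc]
    refine ⟨i - j, ?_, ?_⟩ <;> grind
  have hleft : S.filter (¬ j < ·) ⊆ (Ioc k j).image (j - ·) := by
    intro i hi
    simp only [S, mem_filter, mem_range] at hi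
    simp only [mem_image, mem_Ioc]
    refine ⟨j - i, ?_, ?_⟩ <;> grind
  rw [← sum_filter_add_sum_filter_not S (j < ·)]
  calc _ ≤ ∑ d ∈ Ioc k P, f (j + d) + ∑ d ∈ Ioc k j, f (j - d) := by
        gcongr
        · exact (sum_le_sum_of_subset_of_nonneg hright fun i _ _ => hf i).trans
            (sum_image_le_of_nonneg fun i _ => hf i)
        · exact (sum_le_sum_of_subset_of_nonneg hleft fun i _ _ => hf i).trans
            (sum_image_le_of_nonneg fun i _ => hf i)
    _ ≤ ∑ d ∈ Ioc k (P + j), (f (j + d) + if d ≤ j then f (j - d) else 0) := by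
        rw [sum_add_distrib, ← sum_filter]
        gcongr
        · omega
        · intro d hd
          simp only [mem_filter, mem_Ioc] at hd ⊢
          omega
    _ ≤ ∑ d ∈ Ioc k (P + j), (d : ℝ) ^ (-s) := sum_le_sum fun d hd =>
        natCast_rpow_neg_add_ite_le hs.le (hk.trans (mem_Ioc.1 hd).1) j
    _ ≤ (s - 1)⁻¹ * (k : ℝ) ^ (1 - s) := sum_Ioc_natCast_rpow_neg_le hs hk _

theorem stmt9 {p : ℕ} (K : Matrix (Fin p) (Fin p) ℝ) (hK : K.PosSemidef)
    (C m : ℝ) (hC : 0 < C) (hm : 2 < m)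
    (hdiag : ∀ i : Fin p, K i i ≤ C * ((i : ℕ) + 1 : ℝ) ^ (-m)) :
    ∀ (k : ℕ) (j : Fin p), 0 < k → (k : ℝ) ≤ (j : ℕ) + 1 →
      (∑ i ∈ Finset.univ.filter (fun i : Fin p => (k : ℤ) < |(i : ℤ) - (j : ℤ)|), |K i j|)
        ≤ C * (m / 2 - 1)⁻¹ * (k : ℝ) ^ (-m / 2 + 1) := by
  intro k j hk _
  have hs : 1 < m / 2 := by linarith
  set g : ℕ → ℝ := fun i => (((i : ℝ) + 1) * (((j : ℕ) : ℝ) + 1)) ^ (-(m / 2))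
  set a : Fin p → ℝ := fun i => √C * (((i : ℕ) : ℝ) + 1) ^ (-(m / 2))
  have ha : ∀ i, K i i ≤ a i ^ 2 := fun i => by
    rw [mul_pow, sq_sqrt hC.le, ← rpow_natCast, ← rpow_mul (by positivity)]
    convert hdiag i using 3
    ring
  have hentry : ∀ i, |K i j| ≤ C * g i := fun i => by
    refine (hK.abs_apply_le_of_diag_le_sq (fun i => by positivity) ha i j).trans_eq ?_
    rw [mul_mul_mul_comm, mul_self_sqrt hC.le, ← mul_rpow (by positivity) (by positivity)]
  calc _ ≤ ∑ i ∈ Finset.univ.filter (fun i : Fin p => (k : ℤ) < |(i : ℤ) - (j : ℤ)|), C * g i :=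
        sum_le_sum fun i _ => hentry i
    _ = C * ∑ i ∈ (range p).filter (fun i : ℕ => (k : ℤ) < |(i : ℤ) - (j : ℕ)|), g i := by
        rw [← mul_sum, sum_filter, sum_filter,
          Fin.sum_univ_eq_sum_range (fun i => if (k : ℤ) < |(i : ℤ) - (j : ℕ)| then g i else 0)]
    _ ≤ C * ((m / 2 - 1)⁻¹ * (k : ℝ) ^ (1 - m / 2)) := by
        gcongr
        exact sum_rpow_neg_mul_le_of_lt_dist hs hk p j
    _ = _ := by rw [show -m / 2 + 1 = 1 - m / 2 by ring]; ring
end
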